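/- Let X ~ N(x, σ²I_n) and Y ~ N(x + δ, σ²I_n) with σ > 0 and δ ∈ ℝ^n nonzero, and let f : ℝ^n → {0,1} be measurable. If S = {z ∈ ℝ^n : ⟨δ, z⟩ ≥ β} for some β ∈ ℝ and P(f(X) = 1) ≤ P(X ∈ S), then P(f(Y) = 1) ≤ P(Y ∈ S). -/

import Mathlib

/-! The density of `N(x + δ, σ²Iₙ)` with respect to `N(x, σ²Iₙ)` is
`z ↦ exp ((⟪δ, z - x⟫ - ‖δ‖² / 2) / σ²)`, an increasing function of `⟪δ, z⟫`, so the half-space `S`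
is a superlevel set `{density ≥ t}`. With `E = {f = 1}`, the hypothesis gives
`P(X ∈ E \ S) ≤ P(X ∈ S \ E)`, and weighting by the density (at most `t` on `E \ S`, at least `t`
on `S \ E`) preserves this inequality: this is the Neyman–Pearson lemma. -/

open MeasureTheory ProbabilityTheory

/-- The standard normal cumulative distribution function Φ. -/
noncomputable def stdNormalCDF (x : ℝ) : ℝ :=
  ((gaussianReal 0 1) (Set.Iic x)).toReal

/-- The inverse Φ⁻¹ of the standard normal cdf. -/
noncomputable def stdNormalCDFInv (y : ℝ) : ℝ :=
  Function.invFun stdNormalCDF y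

/-- The isotropic Gaussian measure `N(μ, σ² Iₙ)` on `ℝⁿ`. -/
noncomputable def isoGaussian (n : ℕ) (μ : EuclideanSpace ℝ (Fin n)) (σ : ℝ) :
    Measure (EuclideanSpace ℝ (Fin n)) :=
  (Measure.pi fun i : Fin n => gaussianReal (μ i) ⟨σ ^ 2, sq_nonneg σ⟩).map
    (MeasurableEquiv.toLp 2 (Fin n → ℝ))

/-- The empirical floor function `L̂` with parameters ρ, σ and `c`. -/
noncomputable def empiricalFloor (ρ σ c z : ℝ) : ℝ :=
  stdNormalCDF (stdNormalCDFInv (z - c) - 2 * ρ / σ) - c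

/-- Empirical smoothing: `h̃(x) = (1/q) ∑ₘ h(x + εₘ)`. -/
noncomputable def empSmooth {n q : ℕ} (h : EuclideanSpace ℝ (Fin n) → Fin n → ℝ)
    (x : EuclideanSpace ℝ (Fin n)) (ε : Fin q → EuclideanSpace ℝ (Fin n)) :
    Fin n → ℝ :=
  fun i => (1 / q : ℝ) * ∑ m : Fin q, h (x + ε m) i

/-- Population smoothing: `h̄(x) = E_{ε ~ N(0,σ²Iₙ)}[h(x + ε)]`. -/
noncomputable def popSmooth {n : ℕ} (σ : ℝ) (h : EuclideanSpace ℝ (Fin n) → Fin n → ℝ)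
    (x : EuclideanSpace ℝ (Fin n)) : Fin n → ℝ :=
  fun i => ∫ ε, h (x + ε) i ∂(isoGaussian n 0 σ)

/-- `kthLargest v k` is the k-th largest entry of `v` (1-indexed). -/
noncomputable def kthLargest {n : ℕ} (v : Fin n → ℝ) (k : ℕ) : ℝ :=
  ((Finset.univ.val.map v).sort (· ≤ ·)).getD (n - k) 0

/-- The descending ordinal rank of the entry `v i` in `v` (best rank among ties). -/
noncomputable def descRank {n : ℕ} (v : Fin n → ℝ) (i : Fin n) : ℕ :=
  (Finset.univ.filter fun j => v i < v j).card + 1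

/-- `A` is a set of `K` indices carrying the `K` largest entries of `v`. -/
def IsTopKSet {n : ℕ} (v : Fin n → ℝ) (K : ℕ) (A : Finset (Fin n)) : Prop :=
  A.card = K ∧ ∀ i ∈ A, ∀ j ∉ A, v j ≤ v i

/-- Sparsification: the largest `⌈τ n⌉` entries are mapped to 1, the rest to 0. -/
noncomputable def sparsify {n : ℕ} (τ : ℝ) (v : Fin n → ℝ) : Fin n → ℝ :=
  fun i => if kthLargest v ⌈τ * n⌉₊ ≤ v i then 1 else 0

open scoped ENNReal NNReal

section NeymanPearson

variable {α : Type*} [MeasurableSpace α] {μ : Measure α} {E S : Set α}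

lemma measure_diff_le_measure_diff_of_le [IsFiniteMeasure μ] (hE : MeasurableSet E)
    (hS : MeasurableSet S) (h : μ E ≤ μ S) : μ (E \ S) ≤ μ (S \ E) := by
  rw [← measure_inter_add_sdiff E hS, ← measure_inter_add_sdiff S hE, Set.inter_comm] at h
  exact (ENNReal.add_le_add_iff_left (measure_ne_top μ _)).mp h

theorem neyman_pearson_withDensity [IsFiniteMeasure μ] {g : α → ℝ≥0∞} {t : ℝ≥0∞}
    (hE : MeasurableSet E) (hS : MeasurableSet S)
    (hg_ge : ∀ z ∈ S, t ≤ g z) (hg_le : ∀ z ∉ S, g z ≤ t) (h : μ E ≤ μ S) :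
    μ.withDensity g E ≤ μ.withDensity g S := by
  have hdiff : μ.withDensity g (E \ S) ≤ μ.withDensity g (S \ E) := by
    rw [withDensity_apply _ (hE.diff hS), withDensity_apply _ (hS.diff hE)]
    calc ∫⁻ z in E \ S, g z ∂μ ≤ ∫⁻ _ in E \ S, t ∂μ :=
          setLIntegral_mono' (hE.diff hS) fun z hz => hg_le z hz.2
      _ = t * μ (E \ S) := setLIntegral_const _ _
      _ ≤ t * μ (S \ E) := mul_le_mul_right (measure_diff_le_measure_diff_of_le hE hS h) t
      _ = ∫⁻ _ in S \ E, t ∂μ := (setLIntegral_const _ _).symm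
      _ ≤ ∫⁻ z in S \ E, g z ∂μ := setLIntegral_mono' (hS.diff hE) fun z hz => hg_ge z hz.1
  calc μ.withDensity g E = μ.withDensity g (E ∩ S) + μ.withDensity g (E \ S) :=
        (measure_inter_add_sdiff E hS).symm
    _ ≤ μ.withDensity g (S ∩ E) + μ.withDensity g (S \ E) := by
        rw [Set.inter_comm]; gcongr
    _ = μ.withDensity g S := measure_inter_add_sdiff S hE

end NeymanPearson

lemma MeasurableEquiv.map_withDensity_comp {α β : Type*} [MeasurableSpace α] [MeasurableSpace β]
    (e : α ≃ᵐ β) (μ : Measure α) {g : β → ℝ≥0∞} (hg : Measurable g) :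
    (μ.withDensity (g ∘ e)).map e = (μ.map e).withDensity g := by
  ext s hs
  rw [Measure.map_apply e.measurable hs, withDensity_apply _ hs,
    withDensity_apply _ (e.measurable hs), setLIntegral_map hs hg e.measurable]
  rfl

lemma MeasureTheory.lintegral_pi_prod {ι : Type*} [Fintype ι] {α : ι → Type*}
    [∀ i, MeasurableSpace (α i)] (μ : ∀ i, Measure (α i)) [∀ i, IsProbabilityMeasure (μ i)] {g : ∀ i, α i → ℝ≥0∞}
    (hg : ∀ i, Measurable (g i)) :
    ∫⁻ z, ∏ i, g i (z i) ∂Measure.pi μ = ∏ i, ∫⁻ y, g i y ∂μ i := by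
  rw [lintegral_prod_eq_prod_lintegral_of_indepFun _ _
    (iIndepFun_pi fun i => (hg i).aemeasurable) fun i => (hg i).comp (measurable_pi_apply i)]
  exact Finset.prod_congr rfl fun i _ => (measurePreserving_eval μ i).lintegral_comp (hg i)

lemma MeasureTheory.Measure.pi_withDensity {ι : Type*} [Fintype ι] {α : ι → Type*}
    [∀ i, MeasurableSpace (α i)] (μ : ∀ i, Measure (α i)) [∀ i, IsProbabilityMeasure (μ i)]
    {g : ∀ i, α i → ℝ≥0∞} (hg : ∀ i, Measurable (g i))
    [∀ i, SigmaFinite ((μ i).withDensity (g i))] :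
    Measure.pi (fun i => (μ i).withDensity (g i)) =
      (Measure.pi μ).withDensity fun z => ∏ i, g i (z i) := by
  refine Measure.pi_eq (μ := fun i => (μ i).withDensity (g i)) fun s hs => ?_
  have hbox (z : ∀ i, α i) : (Set.univ.pi s).indicator (fun z => ∏ i, g i (z i)) z =
      ∏ i, (s i).indicator (g i) (z i) := by
    classical
    simp only [Set.indicator_apply, Set.mem_univ_pi, Finset.prod_ite_zero, Finset.mem_univ,
      true_implies]
  rw [withDensity_apply _ (.univ_pi hs), ← lintegral_indicator (.univ_pi hs)]
  simp_rw [hbox]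
  rw [lintegral_pi_prod μ fun i => (hg i).indicator (hs i)]
  exact Finset.prod_congr rfl fun i _ => by rw [lintegral_indicator (hs i), withDensity_apply _ (hs i)]

open Real

lemma gaussianReal_add_eq_withDensity (m c : ℝ) {v : ℝ≥0} (hv : v ≠ 0) :
    gaussianReal (m + c) v = (gaussianReal m v).withDensity
      fun z => ENNReal.ofReal (exp ((c * (z - m) - c ^ 2 / 2) / v)) := by
  rw [gaussianReal_of_var_ne_zero _ hv, gaussianReal_of_var_ne_zero _ hv,
    ← withDensity_mul _ (measurable_gaussianPDF _ _) (by fun_prop)]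
  congr 1
  ext z
  rw [Pi.mul_apply, gaussianPDF, gaussianPDF, ← ENNReal.ofReal_mul (gaussianPDFReal_nonneg _ _ _),
    gaussianPDFReal, gaussianPDFReal, mul_assoc _ (rexp _), ← exp_add]
  congr 3
  field_simp
  ring

instance (n : ℕ) (μ : EuclideanSpace ℝ (Fin n)) (σ : ℝ) :
    IsProbabilityMeasure (isoGaussian n μ σ) := by
  unfold isoGaussian
  -- Instance search does not see through the anonymous constructor `⟨σ ^ 2, _⟩ : ℝ≥0`.
  set v : ℝ≥0 := ⟨σ ^ 2, sq_nonneg σ⟩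
  exact Measure.isProbabilityMeasure_map (MeasurableEquiv.measurable _).aemeasurable

open RealInnerProductSpace in
lemma isoGaussian_add_eq_withDensity (n : ℕ) (x δ : EuclideanSpace ℝ (Fin n)) {σ : ℝ}
    (hσ : σ ≠ 0) :
    isoGaussian n (x + δ) σ = (isoGaussian n x σ).withDensity
      fun z => ENNReal.ofReal (exp ((⟪δ, z - x⟫ - ‖δ‖ ^ 2 / 2) / σ ^ 2)) := by
  have hdens : Measurable fun z : EuclideanSpace ℝ (Fin n) =>
      ENNReal.ofReal (exp ((⟪δ, z - x⟫ - ‖δ‖ ^ 2 / 2) / σ ^ 2)) := by fun_prop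
  unfold isoGaussian
  set v : ℝ≥0 := ⟨σ ^ 2, sq_nonneg σ⟩
  have hv : v ≠ 0 := fun h => hσ (pow_eq_zero_iff two_ne_zero |>.mp (congrArg NNReal.toReal h))
  rw [← MeasurableEquiv.map_withDensity_comp _ _ hdens]
  simp_rw [PiLp.add_apply, gaussianReal_add_eq_withDensity _ _ hv]
  rw [Measure.pi_withDensity _ fun i => by fun_prop]
  congr 2
  funext z
  rw [← ENNReal.ofReal_prod_of_nonneg fun i _ => (exp_pos _).le, ← exp_sum]
  congr 2
  rw [← Finset.sum_div, Finset.sum_sub_distrib]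
  congr 1
  simp [PiLp.inner_apply, EuclideanSpace.norm_sq_eq, Finset.sum_div, mul_comm]

open RealInnerProductSpace in
theorem stmt5_halfspace_neyman_pearson_ge_general
    (n : ℕ) (σ : ℝ) (hσ : 0 < σ)
    (x δ : EuclideanSpace ℝ (Fin n))
    (f : EuclideanSpace ℝ (Fin n) → ℝ) (hf : Measurable f)
    (β : ℝ) (S : Set (EuclideanSpace ℝ (Fin n)))
    (hS : S = {z | β ≤ ⟪δ, z⟫})
    (hX : isoGaussian n x σ {z | f z = 1} ≤ isoGaussian n x σ S) :
    isoGaussian n (x + δ) σ {z | f z = 1} ≤ isoGaussian n (x + δ) σ S := by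
  subst hS
  rw [isoGaussian_add_eq_withDensity n x δ hσ.ne']
  refine neyman_pearson_withDensity (t := .ofReal (exp ((β - ⟪δ, x⟫ - ‖δ‖ ^ 2 / 2) / σ ^ 2)))
    (hf (measurableSet_singleton 1)) (measurableSet_le measurable_const (by fun_prop))
    (fun z hz => ?_) (fun z hz => ?_) hX <;> rw [inner_sub_right] <;> gcongr
  · exact hz
  · exact (not_le.mp hz).le

open RealInnerProductSpace in
/-- Lemma 4.2 of Cohen et al.: for `X ~ N(x, σ²Iₙ)`, `Y ~ N(x+δ, σ²Iₙ)`,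
`f : ℝⁿ → {0,1}` measurable and `S = {z : ⟨δ, z⟩ ≥ β}`,
if `P(f(X) = 1) ≤ P(X ∈ S)` then `P(f(Y) = 1) ≤ P(Y ∈ S)`. -/
theorem stmt5_halfspace_neyman_pearson_ge
    (n : ℕ) (σ : ℝ) (hσ : 0 < σ)
    (x δ : EuclideanSpace ℝ (Fin n)) (hδ : δ ≠ 0)
    (f : EuclideanSpace ℝ (Fin n) → ℝ) (hf : Measurable f)
    (hf01 : ∀ z, f z = 0 ∨ f z = 1)
    (β : ℝ) (S : Set (EuclideanSpace ℝ (Fin n)))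
    (hS : S = {z | β ≤ ⟪δ, z⟫})
    (hX : isoGaussian n x σ {z | f z = 1} ≤ isoGaussian n x σ S) :
    isoGaussian n (x + δ) σ {z | f z = 1} ≤ isoGaussian n (x + δ) σ S :=
  stmt5_halfspace_neyman_pearson_ge_general n σ hσ x δ f hf β S hS hX
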